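/- arXiv:2206.10575 — 2 statements merged into one kernel-verified Lean document; each statement's English description precedes it below -/
import Mathlib

section
/- In the barrier-KKT context, let (x^μ, λ̄, ν) be a μ-central point, let x* ∈ 𝒞, and suppose there is a > 0 such that ⟪F(x), x − x*⟫ ≥ a·‖x − x*‖ for all x ∈ 𝒞. Then ‖x^μ − x*‖ ≤ m·μ/a. -/
open scoped RealInnerProductSpace
open Matrix

/-- The feasible set `𝒞 = {x | φ_i(x) ≤ 0 for all i, and C x = d}`. -/
def FeasSet {n m p : ℕ} (φ : Fin m → EuclideanSpace ℝ (Fin n) → ℝ)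
    (C : Matrix (Fin p) (Fin n) ℝ) (d : EuclideanSpace ℝ (Fin p)) :
    Set (EuclideanSpace ℝ (Fin n)) :=
  {x | (∀ i, φ i x ≤ 0) ∧ Matrix.toEuclideanLin C x = d}

/-- A `μ`-central point `(x^μ, λ̄, ν)`: positive multipliers, stationarity, perturbed
complementarity `λ̄ᵢ φᵢ(x^μ) = −μ`, and primal feasibility `C x^μ = d`. -/
def IsMuCentral {n m p : ℕ} (F : EuclideanSpace ℝ (Fin n) → EuclideanSpace ℝ (Fin n))
    (φ : Fin m → EuclideanSpace ℝ (Fin n) → ℝ)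
    (C : Matrix (Fin p) (Fin n) ℝ) (d : EuclideanSpace ℝ (Fin p)) (μ : ℝ)
    (xμ : EuclideanSpace ℝ (Fin n)) (lamb : Fin m → ℝ)
    (ν : EuclideanSpace ℝ (Fin p)) : Prop :=
  (∀ i, 0 < lamb i) ∧
  F xμ + (∑ i, lamb i • gradient (φ i) xμ) + Matrix.toEuclideanLin Cᵀ ν = 0 ∧
  (∀ i, lamb i * φ i xμ = -μ) ∧
  Matrix.toEuclideanLin C xμ = d

/-! Pairing the stationarity condition with `x^μ - x*` kills the equality-constraint term
(`C x^μ = C x* = d`), and the first-order convexity inequality bounds each barrier term: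
`λ̄ᵢ ⟪∇φᵢ(x^μ), x* - x^μ⟫ ≤ λ̄ᵢ (φᵢ(x*) - φᵢ(x^μ)) ≤ -λ̄ᵢ φᵢ(x^μ) = μ`. Hence
`⟪F(x^μ), x^μ - x*⟫ ≤ m μ`, and the acute-angle condition at the feasible point `x^μ` gives
`a ‖x^μ - x*‖ ≤ m μ`. -/

open scoped Gradient

theorem ConvexOn.inner_gradient_le_sub {E : Type*} [NormedAddCommGroup E] [InnerProductSpace ℝ E]
    [CompleteSpace E] {f : E → ℝ} (hf : ConvexOn ℝ Set.univ f) {x : E}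
    (hx : DifferentiableAt ℝ f x) (y : E) :
    ⟪∇ f x, y - x⟫ ≤ f y - f x := by
  have hline : ConvexOn ℝ Set.univ (f ∘ AffineMap.lineMap (k := ℝ) x y) := by
    simpa using hf.comp_affineMap (AffineMap.lineMap (k := ℝ) x y)
  have hderiv : HasDerivAt (f ∘ AffineMap.lineMap (k := ℝ) x y) ⟪∇ f x, y - x⟫ 0 := by
    have hfx : HasFDerivAt f (InnerProductSpace.toDual ℝ E (∇ f x))
        (AffineMap.lineMap x y (0 : ℝ)) := by
      simpa using hx.hasGradientAt.hasFDerivAt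
    simpa using hfx.comp_hasDerivAt 0 AffineMap.hasDerivAt_lineMap
  simpa [slope_def_field] using
    hline.le_slope_of_hasDerivAt (Set.mem_univ 0) (Set.mem_univ 1) one_pos hderiv

theorem Matrix.inner_toEuclideanLin_transpose_eq_zero {ι κ : Type*} [Fintype ι] [Fintype κ]
    [DecidableEq ι] [DecidableEq κ] (C : Matrix κ ι ℝ) (ν : EuclideanSpace ℝ κ)
    {x y : EuclideanSpace ℝ ι}
    (h : toEuclideanLin C x = toEuclideanLin C y) :
    ⟪toEuclideanLin Cᵀ ν, x - y⟫ = 0 := by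
  rw [← conjTranspose_eq_transpose_of_trivial, toEuclideanLin_conjTranspose_eq_adjoint,
    LinearMap.adjoint_inner_left, map_sub, h, sub_self, inner_zero_right]

namespace IsMuCentral

variable {n m p : ℕ} {F : EuclideanSpace ℝ (Fin n) → EuclideanSpace ℝ (Fin n)}
  {φ : Fin m → EuclideanSpace ℝ (Fin n) → ℝ} {C : Matrix (Fin p) (Fin n) ℝ}
  {d : EuclideanSpace ℝ (Fin p)} {μ : ℝ} {xμ : EuclideanSpace ℝ (Fin n)} {lamb : Fin m → ℝ}
  {ν : EuclideanSpace ℝ (Fin p)}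

theorem mem_feasSet (h : IsMuCentral F φ C d μ xμ lamb ν) (hμ : 0 ≤ μ) :
    xμ ∈ FeasSet φ C d := by
  obtain ⟨hpos, -, hcomp, hfeas⟩ := h
  refine ⟨fun i => nonpos_of_mul_nonpos_right ?_ (hpos i), hfeas⟩
  rw [hcomp i]
  linarith

theorem inner_sub_le (h : IsMuCentral F φ C d μ xμ lamb ν)
    (hconv : ∀ i, ConvexOn ℝ Set.univ (φ i)) (hdiff : ∀ i, Differentiable ℝ (φ i))
    {xstar : EuclideanSpace ℝ (Fin n)} (hxstar : xstar ∈ FeasSet φ C d) :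
    ⟪F xμ, xμ - xstar⟫ ≤ m * μ := by
  obtain ⟨hpos, hstat, hcomp, hfeas⟩ := h
  have hCν := Matrix.inner_toEuclideanLin_transpose_eq_zero C ν (hfeas.trans hxstar.2.symm)
  have hsum : ⟪F xμ, xμ - xstar⟫ + ∑ i, lamb i * ⟪∇ (φ i) xμ, xμ - xstar⟫ = 0 := by
    simpa only [inner_add_left, sum_inner, real_inner_smul_left, hCν, add_zero,
      inner_zero_left] using
      congrArg (⟪·, xμ - xstar⟫) hstat
  calc ⟪F xμ, xμ - xstar⟫ = ∑ i, lamb i * ⟪∇ (φ i) xμ, xstar - xμ⟫ := by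
        simp only [eq_neg_of_add_eq_zero_left hsum, ← Finset.sum_neg_distrib, ← mul_neg,
          ← inner_neg_right, neg_sub]
    _ ≤ ∑ i, lamb i * (φ i xstar - φ i xμ) := by
        gcongr with i
        · exact (hpos i).le
        · exact (hconv i).inner_gradient_le_sub (hdiff i xμ) xstar
    _ ≤ ∑ _i : Fin m, μ := by
        gcongr with i
        rw [mul_sub, hcomp i]
        linarith [mul_nonpos_of_nonneg_of_nonpos (hpos i).le (hxstar.1 i)]
    _ = m * μ := by simp

end IsMuCentral

/-- Lemma on `‖x^μ − x*‖` under the acute-angle condition: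
`‖x^μ − x*‖ ≤ m μ / a`. -/
theorem stmt_18 {n m p : ℕ}
    (φ : Fin m → EuclideanSpace ℝ (Fin n) → ℝ)
    (hφconv : ∀ i, ConvexOn ℝ Set.univ (φ i))
    (hφdiff : ∀ i, Differentiable ℝ (φ i))
    (C : Matrix (Fin p) (Fin n) ℝ) (d : EuclideanSpace ℝ (Fin p))
    (μ : ℝ) (hμ : 0 < μ)
    (F : EuclideanSpace ℝ (Fin n) → EuclideanSpace ℝ (Fin n))
    (xμ : EuclideanSpace ℝ (Fin n)) (lamb : Fin m → ℝ) (ν : EuclideanSpace ℝ (Fin p))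
    (hcentral : IsMuCentral F φ C d μ xμ lamb ν)
    (xstar : EuclideanSpace ℝ (Fin n)) (hxstar : xstar ∈ FeasSet φ C d)
    (a : ℝ) (ha : 0 < a)
    (hacute : ∀ x ∈ FeasSet φ C d, a * ‖x - xstar‖ ≤ ⟪F x, x - xstar⟫) :
    ‖xμ - xstar‖ ≤ (m : ℝ) * μ / a := by
  rw [le_div_iff₀ ha, mul_comm]
  exact (hacute xμ (hcentral.mem_feasSet hμ.le)).trans
    (hcentral.inner_sub_le hφconv hφdiff hxstar)
end

section
/- Let φ_1, …, φ_m : ℝⁿ → ℝ be convex and continuously differentiable, and suppose the open set C_< = {x ∈ ℝⁿ : φ_i(x) < 0 for all i} is nonempty. Fix b ∈ ℝⁿ and μ, β > 0, and define ψ : C_< → ℝ by ψ(x) = (1/2)‖x − b‖² − (μ/β)·Σ_{i=1}^m log(−φ_i(x)). Then ψ attains a global minimum over C_< at a unique point, and a point x ∈ C_< satisfies the equation x − b − (μ/β)·Σ_{i=1}^m ∇φ_i(x)/φ_i(x) = 0 if and only if x is this unique minimizer; in particular, this equation has exactly one solution in C_<. -/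
open scoped RealInnerProductSpace
open Set

/-!
`ψ` is the sum of the `1`-strongly convex `½‖x - b‖²` and the convex barrier
`-(μ/β) ∑ log (-φᵢ)`, so it is strictly convex on the convex open set `C_<`; there a point is a
minimizer iff the gradient of `ψ`, which is the left-hand side of the equation, vanishes.

For existence, the tangent planes of the `φᵢ` at any point give
`log (-φᵢ y) ≤ K + L ‖y - b‖`, against which the quadratic term wins: the sublevel sets of `ψ`
are bounded. On such a sublevel set the sum of the logarithms is bounded below while each of
them is bounded above, so every `φᵢ` stays below some `-ε < 0`, and the sublevel set is a
compact subset of `C_<`.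
-/

theorem le_one_add_abs_add_abs_of_sq_le {t a c : ℝ} (ht : 0 ≤ t) (h : t ^ 2 ≤ a + c * t) :
    t ≤ 1 + |a| + |c| := by
  by_contra! H
  have ht1 : 1 ≤ t := by linarith [abs_nonneg a, abs_nonneg c]
  nlinarith [mul_lt_mul_of_pos_left H (by linarith : 0 < t), le_abs_self a, le_abs_self c,
    mul_nonneg (abs_nonneg a) (sub_nonneg.2 ht1), mul_nonneg (sub_nonneg.2 (le_abs_self c)) ht]

theorem le_of_le_sum_of_forall_le {ι : Type*} [Fintype ι] {x : ι → ℝ} {s U : ℝ}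
    (hs : s ≤ ∑ j, x j) (hU : ∀ j, x j ≤ U) (i : ι) :
    s - (Fintype.card ι - 1) * U ≤ x i := by
  classical
  have hsplit := Finset.add_sum_erase Finset.univ x (Finset.mem_univ i)
  have hrest := Finset.sum_le_card_nsmul (Finset.univ.erase i) x U fun j _ => hU j
  have hcard : ((Finset.univ.erase i).card : ℝ) = Fintype.card ι - 1 := by
    rw [eq_sub_iff_add_eq, ← Finset.card_univ]
    exact_mod_cast Finset.card_erase_add_one (Finset.mem_univ i)
  rw [nsmul_eq_mul, hcard] at hrest
  linarith

theorem exists_isMinOn_of_isCompact_sublevel {α : Type*} [TopologicalSpace α] {f : α → ℝ}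
    {s : Set α} {x₁ : α} (hx₁ : x₁ ∈ s) (hK : IsCompact {x ∈ s | f x ≤ f x₁})
    (hf : ContinuousOn f {x ∈ s | f x ≤ f x₁}) : ∃ x₀ ∈ s, IsMinOn f s x₀ := by
  obtain ⟨x₀, ⟨hx₀, -⟩, hmin⟩ := hK.exists_isMinOn ⟨x₁, hx₁, le_rfl⟩ hf
  refine ⟨x₀, hx₀, fun x hx => ?_⟩
  by_cases h : f x ≤ f x₁
  · exact hmin ⟨hx, h⟩
  · exact (hmin ⟨hx₁, le_rfl⟩).trans (not_le.1 h).le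

theorem ConcaveOn.fun_sum {E ι : Type*} [AddCommGroup E] [Module ℝ E] {s : Set E}
    {t : Finset ι} {f : ι → E → ℝ} (hs : Convex ℝ s) (hf : ∀ i ∈ t, ConcaveOn ℝ s (f i)) :
    ConcaveOn ℝ s (fun x => ∑ i ∈ t, f i x) := by
  refine ⟨hs, fun x hx y hy a c ha hc hac => ?_⟩
  simp only [smul_eq_mul, Finset.mul_sum, ← Finset.sum_add_distrib]
  exact Finset.sum_le_sum fun i hi => (hf i hi).2 hx hy ha hc hac

theorem ConvexOn.concaveOn_log_neg {E : Type*} [AddCommGroup E] [Module ℝ E] {s : Set E}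
    {f : E → ℝ} (hf : ConvexOn ℝ s f) (hneg : ∀ x ∈ s, f x < 0) :
    ConcaveOn ℝ s (fun x => Real.log (-f x)) := by
  refine ⟨hf.1, fun x hx y hy a c ha hc hac => ?_⟩
  have hx' : -f x ∈ Ioi (0 : ℝ) := neg_pos.2 (hneg x hx)
  have hy' : -f y ∈ Ioi (0 : ℝ) := neg_pos.2 (hneg y hy)
  calc a • Real.log (-f x) + c • Real.log (-f y)
      ≤ Real.log (a • -f x + c • -f y) := strictConcaveOn_log_Ioi.concaveOn.2 hx' hy' ha hc hac
    _ ≤ Real.log (-f (a • x + c • y)) := by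
      refine Real.log_le_log ((convex_Ioi 0) hx' hy' ha hc hac) ?_
      have := hf.2 hx hy ha hc hac
      simp only [smul_eq_mul] at this ⊢
      linarith

theorem strongConvexOn_half_norm_sub_sq {E : Type*} [NormedAddCommGroup E]
    [InnerProductSpace ℝ E] (b : E) :
    StrongConvexOn univ 1 (fun x : E => 1 / 2 * ‖x - b‖ ^ 2) := by
  rw [strongConvexOn_iff_convex]
  have h : (fun x : E => 1 / 2 * ‖x - b‖ ^ 2 - 1 / 2 * ‖x‖ ^ 2)
      = fun x => -⟪b, x⟫ + 1 / 2 * ‖b‖ ^ 2 := by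
    ext x
    rw [norm_sub_sq_real, real_inner_comm]
    ring
  rw [h]
  exact ((-innerₗ E b).convexOn convex_univ).add_const _

section FirstOrder

variable {E : Type*} [NormedAddCommGroup E] [InnerProductSpace ℝ E] [CompleteSpace E]
  {f : E → ℝ} {s : Set E} {x y g : E}

theorem ConvexOn.add_inner_le_of_hasGradientAt (hf : ConvexOn ℝ s f) (hx : x ∈ s)
    (hy : y ∈ s) (hg : HasGradientAt f g x) : f x + ⟪g, y - x⟫ ≤ f y := by
  have hline : ConvexOn ℝ (Icc 0 1) (f ∘ AffineMap.lineMap (k := ℝ) x y) :=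
    (hf.comp_affineMap _).subset (fun t ht => hf.1.lineMap_mem hx hy ht) (convex_Icc 0 1)
  have hderiv : HasDerivAt (f ∘ AffineMap.lineMap (k := ℝ) x y) ⟪g, y - x⟫ 0 := by
    have hg' := hasGradientAt_iff_hasFDerivAt.1 hg
    rw [← AffineMap.lineMap_apply_zero x y (k := ℝ)] at hg'
    simpa using hg'.comp_hasDerivAt (0 : ℝ) AffineMap.hasDerivAt_lineMap
  have := hline.le_slope_of_hasDerivAt (by simp) (by simp) zero_lt_one hderiv
  simp only [slope_def_field, Function.comp_apply, AffineMap.lineMap_apply_one,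
    AffineMap.lineMap_apply_zero, sub_zero, div_one] at this
  linarith

theorem ConvexOn.exists_sub_mul_norm_sub_le (hf : ConvexOn ℝ univ f)
    (hd : DifferentiableAt ℝ f x) (b : E) :
    ∃ A L : ℝ, 0 ≤ L ∧ ∀ y, A - L * ‖y - b‖ ≤ f y := by
  refine ⟨f x - ‖gradient f x‖ * ‖b - x‖, ‖gradient f x‖, norm_nonneg _, fun y => ?_⟩
  have h := hf.add_inner_le_of_hasGradientAt (mem_univ x) (mem_univ y) hd.hasGradientAt
  have hcs := neg_le_of_abs_le (abs_real_inner_le_norm (gradient f x) (y - x))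
  have htri := mul_le_mul_of_nonneg_left (norm_sub_le_norm_sub_add_norm_sub y b x)
    (norm_nonneg (gradient f x))
  linarith

theorem ConvexOn.hasGradientAt_eq_zero_iff_isMinOn (hf : ConvexOn ℝ s f)
    (hs : IsOpen s) (hx : x ∈ s) (hg : HasGradientAt f g x) : g = 0 ↔ IsMinOn f s x := by
  constructor
  · rintro rfl y hy
    simpa using hf.add_inner_le_of_hasGradientAt hx hy hg
  · intro hmin
    have := (hmin.isLocalMin (hs.mem_nhds hx)).hasFDerivAt_eq_zero hg.hasFDerivAt
    simpa using this

end FirstOrder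

def strictFeasibleSet {E ι : Type*} (φ : ι → E → ℝ) : Set E := {x | ∀ i, φ i x < 0}

theorem isOpen_strictFeasibleSet {E ι : Type*} [TopologicalSpace E] [Finite ι]
    {φ : ι → E → ℝ} (hφ : ∀ i, Continuous (φ i)) : IsOpen (strictFeasibleSet φ) := by
  simp only [strictFeasibleSet, ofPred_forall]
  exact isOpen_iInter_of_finite fun i => isOpen_lt (hφ i) continuous_const

theorem convex_strictFeasibleSet {E ι : Type*} [AddCommGroup E] [Module ℝ E]
    {φ : ι → E → ℝ} (hφ : ∀ i, ConvexOn ℝ univ (φ i)) : Convex ℝ (strictFeasibleSet φ) := by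
  simp only [strictFeasibleSet, ofPred_forall]
  exact convex_iInter fun i => by simpa using (hφ i).convex_lt 0

section LogBarrier

variable {E ι : Type*} [NormedAddCommGroup E] [Fintype ι]

noncomputable def proxLogBarrier (φ : ι → E → ℝ) (b : E) (M : ℝ) (x : E) : ℝ :=
  1 / 2 * ‖x - b‖ ^ 2 - M * ∑ i, Real.log (-(φ i x))

variable {φ : ι → E → ℝ} {b : E} {M K L : ℝ}

theorem continuousOn_proxLogBarrier (hφ : ∀ i, Continuous (φ i)) :
    ContinuousOn (proxLogBarrier φ b M) (strictFeasibleSet φ) := by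
  refine ContinuousOn.sub (by fun_prop) (continuousOn_const.mul
    (continuousOn_finsetSum _ fun i _ => ?_))
  exact (hφ i).neg.continuousOn.log fun x hx => (neg_pos.2 (hx i)).ne'

theorem strictConvexOn_proxLogBarrier [InnerProductSpace ℝ E] (hφ : ∀ i, ConvexOn ℝ univ (φ i))
    (hM : 0 ≤ M) :
    StrictConvexOn ℝ (strictFeasibleSet φ) (proxLogBarrier φ b M) := by
  have hC := convex_strictFeasibleSet hφ
  have hlog : ConcaveOn ℝ (strictFeasibleSet φ) fun x => ∑ i, Real.log (-φ i x) :=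
    ConcaveOn.fun_sum hC fun i _ =>
      ((hφ i).subset (subset_univ _) hC).concaveOn_log_neg fun x hx => hx i
  have hquad := ((strongConvexOn_half_norm_sub_sq b).strictConvexOn one_pos).subset
    (subset_univ _) hC
  refine (hquad.add_convexOn (hlog.smul hM).neg).congr fun x _ => ?_
  simp only [proxLogBarrier, Pi.add_apply, Pi.neg_apply, smul_eq_mul]
  ring

theorem hasGradientAt_proxLogBarrier [InnerProductSpace ℝ E] [CompleteSpace E] {x : E}
    (hφ : ∀ i, DifferentiableAt ℝ (φ i) x) (hx : x ∈ strictFeasibleSet φ) :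
    HasGradientAt (proxLogBarrier φ b M)
      (x - b - M • ∑ i, (φ i x)⁻¹ • gradient (φ i) x) x := by
  have hquad := (((hasFDerivAt_id x).sub_const b).norm_sq).const_mul (1 / 2 : ℝ)
  have hlog : HasFDerivAt (fun y => ∑ i, Real.log (-φ i y))
      (∑ i, (-φ i x)⁻¹ • -(InnerProductSpace.toDual ℝ E (gradient (φ i) x))) x :=
    HasFDerivAt.fun_sum fun i _ =>
      (hasGradientAt_iff_hasFDerivAt.1 (hφ i).hasGradientAt).neg.log (neg_pos.2 (hx i)).ne'
  rw [hasGradientAt_iff_hasFDerivAt]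
  refine (hquad.sub (hlog.const_mul M)).congr_fderiv ?_
  ext v
  simp

theorem exists_log_neg_le_add_mul_norm_sub [InnerProductSpace ℝ E] [CompleteSpace E]
    (hφ : ∀ i, ConvexOn ℝ univ (φ i)) (hd : ∀ i, Differentiable ℝ (φ i)) (b : E) :
    ∃ K L : ℝ, 0 ≤ L ∧ ∀ i y, φ i y < 0 → Real.log (-φ i y) ≤ K + L * ‖y - b‖ := by
  choose A L hL hAL using fun i => (hφ i).exists_sub_mul_norm_sub_le (hd i 0) b
  refine ⟨∑ i, |A i|, ∑ i, L i, Finset.sum_nonneg fun i _ => hL i, fun i y hy => ?_⟩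
  have hA := Finset.single_le_sum (fun j _ => abs_nonneg (A j)) (Finset.mem_univ i)
  have hL' := mul_le_mul_of_nonneg_right
    (Finset.single_le_sum (fun j _ => hL j) (Finset.mem_univ i)) (norm_nonneg (y - b))
  have h1 := Real.log_le_sub_one_of_pos (neg_pos.2 hy)
  have h2 := hAL i y
  have h3 := neg_le_abs (A i)
  linarith

theorem exists_norm_sub_le_of_proxLogBarrier_le (hM : 0 < M)
    (hlog : ∀ i y, φ i y < 0 → Real.log (-φ i y) ≤ K + L * ‖y - b‖) (c : ℝ) :
    ∃ R, ∀ y ∈ strictFeasibleSet φ, proxLogBarrier φ b M y ≤ c → ‖y - b‖ ≤ R := by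
  refine ⟨1 + |2 * c + 2 * M * Fintype.card ι * K| + |2 * M * Fintype.card ι * L|,
    fun y hy hc => le_one_add_abs_add_abs_of_sq_le (norm_nonneg _) ?_⟩
  have hsum : ∑ i, Real.log (-φ i y) ≤ Fintype.card ι * (K + L * ‖y - b‖) := by
    have := Finset.sum_le_card_nsmul Finset.univ _ _ fun i _ => hlog i y (hy i)
    rwa [nsmul_eq_mul, Finset.card_univ] at this
  unfold proxLogBarrier at hc
  nlinarith [mul_le_mul_of_nonneg_left hsum hM.le]

theorem exists_pos_forall_le_neg_of_proxLogBarrier_le (hM : 0 < M) (hL : 0 ≤ L)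
    (hlog : ∀ i y, φ i y < 0 → Real.log (-φ i y) ≤ K + L * ‖y - b‖) (c : ℝ) :
    ∃ ε > 0, ∀ y ∈ strictFeasibleSet φ, proxLogBarrier φ b M y ≤ c → ∀ i, φ i y ≤ -ε := by
  obtain ⟨R, hR⟩ := exists_norm_sub_le_of_proxLogBarrier_le hM hlog c
  refine ⟨Real.exp (-c / M - (Fintype.card ι - 1) * (K + L * R)), Real.exp_pos _,
    fun y hy hc i => ?_⟩
  have hsum : -c / M ≤ ∑ j, Real.log (-φ j y) := by
    unfold proxLogBarrier at hc
    rw [div_le_iff₀ hM]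
    nlinarith [sq_nonneg ‖y - b‖]
  have hle : ∀ j, Real.log (-φ j y) ≤ K + L * R := fun j =>
    (hlog j y (hy j)).trans (by gcongr; exact hR y hy hc)
  have := Real.exp_le_exp.2 (le_of_le_sum_of_forall_le hsum hle i)
  rw [Real.exp_log (neg_pos.2 (hy i))] at this
  linarith

theorem isCompact_proxLogBarrier_sublevel [ProperSpace E] (hφ : ∀ i, Continuous (φ i))
    (hM : 0 < M) (hL : 0 ≤ L)
    (hlog : ∀ i y, φ i y < 0 → Real.log (-φ i y) ≤ K + L * ‖y - b‖) (c : ℝ) :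
    IsCompact {y ∈ strictFeasibleSet φ | proxLogBarrier φ b M y ≤ c} := by
  obtain ⟨R, hR⟩ := exists_norm_sub_le_of_proxLogBarrier_le hM hlog c
  obtain ⟨ε, hε, hφε⟩ := exists_pos_forall_le_neg_of_proxLogBarrier_le hM hL hlog c
  set T : Set E := {y | ∀ i, φ i y ≤ -ε}
  have hTC : T ⊆ strictFeasibleSet φ := fun y hy i => (hy i).trans_lt (neg_lt_zero.2 hε)
  have hT : IsClosed T := by
    simp only [T, ofPred_forall]
    exact isClosed_iInter fun i => isClosed_le (hφ i) continuous_const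
  have hS : {y ∈ strictFeasibleSet φ | proxLogBarrier φ b M y ≤ c}
      = T ∩ proxLogBarrier φ b M ⁻¹' Iic c := by
    ext y
    exact ⟨fun ⟨hy, hc⟩ => ⟨hφε y hy hc, hc⟩, fun ⟨hy, hc⟩ => ⟨hTC hy, hc⟩⟩
  refine Metric.isCompact_of_isClosed_isBounded ?_ ?_
  · rw [hS]
    exact ((continuousOn_proxLogBarrier hφ).mono hTC).preimage_isClosed_of_isClosed hT
      isClosed_Iic
  · exact (Metric.isBounded_closedBall (x := b) (r := R)).subset
      fun y ⟨hy, hc⟩ => mem_closedBall_iff_norm.2 (hR y hy hc)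

end LogBarrier

/-- Proposition on the unique solution of the proximal log-barrier
equation: `ψ(x) = (1/2)‖x − b‖² − (μ/β) Σᵢ log(−φᵢ(x))` attains a global minimum on
`C_< = {x | φᵢ(x) < 0 ∀ i}` at a unique point, and `x ∈ C_<` solves
`x − b − (μ/β) Σᵢ ∇φᵢ(x)/φᵢ(x) = 0` iff it is this minimizer. -/
theorem stmt_19 {n m : ℕ}
    (φ : Fin m → EuclideanSpace ℝ (Fin n) → ℝ)
    (hφconv : ∀ i, ConvexOn ℝ Set.univ (φ i))
    (hφC1 : ∀ i, ContDiff ℝ 1 (φ i))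
    (hne : {x : EuclideanSpace ℝ (Fin n) | ∀ i, φ i x < 0}.Nonempty)
    (b : EuclideanSpace ℝ (Fin n)) (μ β : ℝ) (hμ : 0 < μ) (hβ : 0 < β)
    (ψ : EuclideanSpace ℝ (Fin n) → ℝ)
    (hψ : ∀ x, ψ x = (1 / 2) * ‖x - b‖ ^ 2 - (μ / β) * ∑ i, Real.log (-(φ i x))) :
    ∃ x₀ ∈ {x : EuclideanSpace ℝ (Fin n) | ∀ i, φ i x < 0},
      (∀ x ∈ {x : EuclideanSpace ℝ (Fin n) | ∀ i, φ i x < 0}, ψ x₀ ≤ ψ x) ∧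
      (∀ x ∈ {x : EuclideanSpace ℝ (Fin n) | ∀ i, φ i x < 0},
        (∀ x' ∈ {x : EuclideanSpace ℝ (Fin n) | ∀ i, φ i x < 0}, ψ x ≤ ψ x') → x = x₀) ∧
      (∀ x ∈ {x : EuclideanSpace ℝ (Fin n) | ∀ i, φ i x < 0},
        (x - b - (μ / β) • ∑ i, (φ i x)⁻¹ • gradient (φ i) x = 0) ↔ x = x₀) := by
  obtain rfl : ψ = proxLogBarrier φ b (μ / β) := funext hψ
  have hM : 0 < μ / β := div_pos hμ hβ
  have hd (i) : Differentiable ℝ (φ i) := (hφC1 i).differentiable one_ne_zero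
  have hcont (i) : Continuous (φ i) := (hd i).continuous
  have hstrict := strictConvexOn_proxLogBarrier (b := b) hφconv hM.le
  obtain ⟨x₁, hx₁⟩ := hne
  obtain ⟨K, L, hL, hlog⟩ := exists_log_neg_le_add_mul_norm_sub hφconv hd b
  obtain ⟨x₀, hx₀, hmin⟩ := exists_isMinOn_of_isCompact_sublevel hx₁
    (isCompact_proxLogBarrier_sublevel hcont hM hL hlog _)
    ((continuousOn_proxLogBarrier hcont).mono fun y hy => hy.1)
  refine ⟨x₀, hx₀, hmin, fun x hx hxmin => hstrict.eq_of_isMinOn hxmin hmin hx hx₀,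
    fun x hx => ?_⟩
  rw [hstrict.convexOn.hasGradientAt_eq_zero_iff_isMinOn (isOpen_strictFeasibleSet hcont) hx
    (hasGradientAt_proxLogBarrier (fun i => hd i x) hx)]
  exact ⟨fun h => hstrict.eq_of_isMinOn h hmin hx hx₀, by rintro rfl; exact hmin⟩
end
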